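/- arXiv:2204.12599 — 2 statements merged into one kernel-verified Lean document; each statement's English description precedes it below -/
import Mathlib

section
/- For peak Λ = 1/2, every swap Schelling game (G,b,1/2) played on a bipartite graph G (with 1 ≤ b ≤ n/2) admits a swap equilibrium. -/
/-!
Colour `b` nodes of the larger side of a bipartition blue: blue agents then have no blue
neighbours. For `Λ = 1/2` the utility satisfies `p (1 - x) = p x`, and when two adjacent agents of
different colours swap, each one's new fraction is one minus the other's old fraction; so the swap
merely exchanges their utilities and cannot benefit both. If the blue agent is not adjacent to its
red partner, the red agent would land on a node all of whose neighbours are red, i.e. at fraction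
`1`, where the utility is `0`.
-/

open Finset

namespace SwapSchelling

variable {V : Type*} [Fintype V] [DecidableEq V]

open scoped Classical in
/-- The closed neighborhood `N[v]` of a node `v` in `G`, as a `Finset`. -/
noncomputable def closedNbhd (G : SimpleGraph V) (v : V) : Finset V :=
  univ.filter (fun u => u = v ∨ G.Adj v u)

open scoped Classical in
/-- The degree `δ(v)` of a node `v` in `G`. -/
noncomputable def deg (G : SimpleGraph V) (v : V) : ℕ :=
  (univ.filter (fun u => G.Adj v u)).card

/-- The maximum degree `Δ(G)`. -/
noncomputable def maxDeg (G : SimpleGraph V) : ℕ := univ.sup (deg G)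

/-- The minimum degree `δ(G)`. -/
noncomputable def minDeg (G : SimpleGraph V) : ℕ := sInf (Set.range (deg G))

open scoped Classical in
/-- `frac G c v` is the fraction of nodes in the closed neighborhood of `v` that have
the same color as `v` (that is, `f_i(σ)` for the agent `i` occupying node `v`). -/
noncomputable def frac (G : SimpleGraph V) (c : V → Bool) (v : V) : ℝ :=
  (((closedNbhd G v).filter (fun u => c u = c v)).card : ℝ) / ((closedNbhd G v).card : ℝ)

/-- The coloring obtained from `c` after the agents on nodes `v` and `w` swap positions. -/
def swapColor (c : V → Bool) (v w : V) : V → Bool := c ∘ Equiv.swap v w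

/-- A single-peaked utility function `p` with peak at `Λ`: `p 0 = 0`, `p` is strictly
increasing on `[0,Λ]`, `p Λ = 1`, and `p x = p (Λ(1-x)/(1-Λ))` for `x ∈ [Λ,1]`. -/
structure IsSinglePeaked (p : ℝ → ℝ) (Λ : ℝ) : Prop where
  peak_mem : Λ ∈ Set.Ioo (0 : ℝ) 1
  map_zero : p 0 = 0
  strictMonoOn : StrictMonoOn p (Set.Icc 0 Λ)
  map_peak : p Λ = 1
  symm : ∀ x ∈ Set.Icc Λ 1, p x = p (Λ * (1 - x) / (1 - Λ))

/-- A strategy profile: a 2-coloring of the nodes with exactly `b` blue (`true`) nodes. -/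
def IsProfile (c : V → Bool) (b : ℕ) : Prop :=
  (univ.filter (fun v => c v = true)).card = b

/-- The structural data of a swap Schelling game `(G, b, Λ)` with utility function `p`:
`G` is connected, there are `b` blue agents with `1 ≤ b ≤ n/2`, and `p` is a
single-peaked utility function with peak `Λ`. -/
structure IsGame (G : SimpleGraph V) (b : ℕ) (Λ : ℝ) (p : ℝ → ℝ) : Prop where
  connected : G.Connected
  one_le_b : 1 ≤ b
  b_le_half : 2 * b ≤ Fintype.card V
  singlePeaked : IsSinglePeaked p Λ

/-- The swap of the two (differently colored) agents occupying nodes `v` and `w`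
is profitable: both agents strictly increase their utility. -/
def ProfitableSwap (G : SimpleGraph V) (p : ℝ → ℝ) (c : V → Bool) (v w : V) : Prop :=
  c v ≠ c w ∧
  p (frac G (swapColor c v w) w) > p (frac G c v) ∧
  p (frac G (swapColor c v w) v) > p (frac G c w)

/-- A swap equilibrium: no profitable swap exists. -/
def IsSwapEquilibrium (G : SimpleGraph V) (p : ℝ → ℝ) (c : V → Bool) : Prop :=
  ∀ v w, ¬ ProfitableSwap G p c v w

open scoped Classical in
/-- The degree of integration: the number of non-segregated agents. -/
noncomputable def DoI (G : SimpleGraph V) (c : V → Bool) : ℕ :=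
  (univ.filter (fun v => frac G c v ≠ 1)).card

open scoped Classical in
/-- The number of monochromatic edges of `G` under the coloring `c`. -/
noncomputable def Phi (G : SimpleGraph V) (c : V → Bool) : ℕ :=
  (G.edgeFinset.filter (fun e => ∀ u ∈ e, ∀ w ∈ e, c u = c w)).card

open scoped Classical in
/-- The number of edges of `G`. -/
noncomputable def numEdges (G : SimpleGraph V) : ℕ :=
  (univ.filter (fun e : Sym2 V => e ∈ G.edgeSet)).card

/-- A finset of nodes is an independent set of `G`. -/
def IsIndepSet (G : SimpleGraph V) (s : Finset V) : Prop :=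
  ∀ u ∈ s, ∀ w ∈ s, ¬ G.Adj u w

open scoped Classical in
/-- The independence number `α(G)`. -/
noncomputable def indepNum (G : SimpleGraph V) : ℕ :=
  univ.sup (fun s : Finset V => if IsIndepSet G s then s.card else 0)

open scoped Classical in
/-- The degree of `v` inside the subgraph of `G` induced by the node set `s`. -/
noncomputable def degOn (G : SimpleGraph V) (s : Finset V) (v : V) : ℕ :=
  (s.filter (fun u => G.Adj v u)).card


section

namespace IsSinglePeaked

variable {p : ℝ → ℝ} {Λ x : ℝ}

theorem nonneg_of_mem_Icc_peak (hp : IsSinglePeaked p Λ) (hx : x ∈ Set.Icc 0 Λ) :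
    0 ≤ p x := by
  have h0 : (0 : ℝ) ∈ Set.Icc 0 Λ := ⟨le_rfl, hp.peak_mem.1.le⟩
  simpa only [hp.map_zero] using hp.strictMonoOn.monotoneOn h0 hx hx.1

theorem nonneg (hp : IsSinglePeaked p Λ) (hx : x ∈ Set.Icc 0 1) : 0 ≤ p x := by
  obtain ⟨hΛ0, hΛ1⟩ := hp.peak_mem
  rcases le_total x Λ with hxΛ | hΛx
  · exact hp.nonneg_of_mem_Icc_peak ⟨hx.1, hxΛ⟩
  · rw [hp.symm x ⟨hΛx, hx.2⟩]
    refine hp.nonneg_of_mem_Icc_peak ⟨div_nonneg (mul_nonneg hΛ0.le (by linarith [hx.2]))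
      (by linarith), ?_⟩
    rw [div_le_iff₀ (by linarith)]
    nlinarith

theorem map_one (hp : IsSinglePeaked p Λ) : p 1 = 0 := by
  simpa [hp.map_zero] using hp.symm 1 ⟨hp.peak_mem.2.le, le_rfl⟩

theorem apply_one_sub (hp : IsSinglePeaked p (1 / 2)) (hx : x ∈ Set.Icc 0 1) :
    p (1 - x) = p x := by
  have key : ∀ y ∈ Set.Icc (1 / 2 : ℝ) 1, p y = p (1 - y) := fun y hy => by
    rw [hp.symm y hy]; ring_nf
  rcases le_total (1 / 2) x with hx2 | hx2
  · exact (key x ⟨hx2, hx.2⟩).symm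
  · simpa using key (1 - x) ⟨by linarith, by linarith [hx.1]⟩

end IsSinglePeaked

theorem exists_isIndepSet_card_eq {V : Type*} [Fintype V] {G : SimpleGraph V} {k b : ℕ}
    (hG : G.Colorable k) (hk : 0 < k) (hb : k * b ≤ Fintype.card V) :
    ∃ S : Finset V, IsIndepSet G S ∧ S.card = b := by
  obtain ⟨χ⟩ := hG
  obtain ⟨i, -, hi⟩ := exists_le_card_fiber_of_mul_le_card_of_maps_to (s := univ) (t := univ)
    (f := χ) (fun _ _ => mem_univ _) ⟨⟨0, hk⟩, mem_univ _⟩ (by simpa using hb)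
  obtain ⟨S, hSi, hSb⟩ := exists_subset_card_eq hi
  refine ⟨S, fun u hu w hw hadj => χ.valid hadj ?_, hSb⟩
  rw [(mem_filter.1 (hSi hu)).2, (mem_filter.1 (hSi hw)).2]

variable {V : Type*} [DecidableEq V] {G : SimpleGraph V} {c : V → Bool} {v w : V}

theorem swapColor_comm (c : V → Bool) (v w : V) : swapColor c v w = swapColor c w v := by
  rw [swapColor, swapColor, Equiv.swap_comm]

theorem card_filter_swapColor {s : Finset V} (hv : v ∈ s) (hw : w ∈ s) (P : Bool → Prop)
    [DecidablePred P] :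
    (s.filter (fun u => P (swapColor c v w u))).card = (s.filter (fun u => P (c u))).card := by
  have hs : {a | Equiv.swap v w a ≠ a} ⊆ s := fun a ha => by
    by_contra has
    exact ha (Equiv.swap_apply_of_ne_of_ne (by rintro rfl; exact has hv)
      (by rintro rfl; exact has hw))
  have hmap := filter_map (f := (Equiv.swap v w).toEmbedding) (s := s) (p := fun u => P (c u))
  rw [map_perm hs] at hmap
  rw [hmap, card_map]
  rfl

variable [Fintype V]

theorem mem_closedNbhd_self (G : SimpleGraph V) (v : V) : v ∈ closedNbhd G v := by
  simp [closedNbhd]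

theorem mem_closedNbhd_of_adj (h : G.Adj v w) : w ∈ closedNbhd G v := by
  simp [closedNbhd, h]

theorem frac_mem_Icc (G : SimpleGraph V) (c : V → Bool) (v : V) : frac G c v ∈ Set.Icc 0 1 := by
  have hpos : (0 : ℝ) < (closedNbhd G v).card := by
    exact_mod_cast card_pos.2 ⟨v, mem_closedNbhd_self G v⟩
  refine ⟨by unfold frac; positivity, ?_⟩
  rw [frac, div_le_one hpos]
  exact_mod_cast card_filter_le _ _

theorem frac_eq_one_of_forall_adj (h : ∀ u, G.Adj v u → c u = c v) : frac G c v = 1 := by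
  have hall : (closedNbhd G v).filter (fun u => c u = c v) = closedNbhd G v := by
    refine filter_true_of_mem fun u hu => ?_
    rcases (by simpa [closedNbhd] using hu : u = v ∨ G.Adj v u) with rfl | hadj
    exacts [rfl, h u hadj]
  rw [frac, hall, div_self]
  exact_mod_cast (card_pos.2 ⟨v, mem_closedNbhd_self G v⟩).ne'

theorem frac_swapColor_right_of_adj (hadj : G.Adj v w) (hne : c v ≠ c w) :
    frac G (swapColor c v w) w = 1 - frac G c w := by
  have hs : (0 : ℝ) < (closedNbhd G w).card := by
    exact_mod_cast card_pos.2 ⟨w, mem_closedNbhd_self G w⟩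
  have hcw : swapColor c v w w = c v := by simp [swapColor]
  have hcount : ((closedNbhd G w).filter (fun u => swapColor c v w u = c v)).card
      = ((closedNbhd G w).filter (fun u => ¬ c u = c w)).card := by
    rw [card_filter_swapColor (mem_closedNbhd_of_adj hadj.symm) (mem_closedNbhd_self G w)
      (· = c v)]
    congr 1
    refine filter_congr fun u _ => ?_
    revert hne
    cases c u <;> cases c v <;> cases c w <;> decide
  have hsplit := card_filter_add_card_filter_not (s := closedNbhd G w) (fun u => c u = c w)
  rw [frac, frac, hcw, hcount, eq_sub_iff_add_eq, ← add_div, div_eq_one_iff_eq hs.ne']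
  exact_mod_cast (add_comm _ _).trans hsplit

theorem frac_swapColor_left_of_adj (hadj : G.Adj v w) (hne : c v ≠ c w) :
    frac G (swapColor c v w) v = 1 - frac G c v := by
  rw [swapColor_comm]
  exact frac_swapColor_right_of_adj hadj.symm hne.symm

theorem profitableSwap_comm {p : ℝ → ℝ} :
    ProfitableSwap G p c v w ↔ ProfitableSwap G p c w v := by
  simp only [ProfitableSwap, swapColor_comm c w v, ne_comm (a := c w)]
  tauto

theorem not_profitableSwap_of_adj {p : ℝ → ℝ} (hp : IsSinglePeaked p (1 / 2))
    (hadj : G.Adj v w) : ¬ ProfitableSwap G p c v w := by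
  rintro ⟨hne, hgain_v, hgain_w⟩
  rw [frac_swapColor_right_of_adj hadj hne, hp.apply_one_sub (frac_mem_Icc G c w)] at hgain_v
  rw [frac_swapColor_left_of_adj hadj hne, hp.apply_one_sub (frac_mem_Icc G c v)] at hgain_w
  exact lt_asymm hgain_v hgain_w

theorem not_profitableSwap_of_not_adj {Λ : ℝ} {p : ℝ → ℝ} (hp : IsSinglePeaked p Λ)
    (hadj : ¬ G.Adj v w) (hv : ∀ u, G.Adj v u → c u = c w) : ¬ ProfitableSwap G p c v w := by
  rintro ⟨-, -, hgain_w⟩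
  have hsegregated : frac G (swapColor c v w) v = 1 := by
    refine frac_eq_one_of_forall_adj fun u hu => ?_
    have huv : u ≠ v := fun h => G.loopless.irrefl v (h ▸ hu)
    have huw : u ≠ w := fun h => hadj (h ▸ hu)
    simp [swapColor, Equiv.swap_apply_of_ne_of_ne huv huw, hv u hu]
  rw [hsegregated, hp.map_one] at hgain_w
  exact (hp.nonneg (frac_mem_Icc G c w)).not_gt hgain_w

theorem isSwapEquilibrium_of_isIndepSet {p : ℝ → ℝ} (hp : IsSinglePeaked p (1 / 2))
    {S : Finset V} (hS : IsIndepSet G S) : IsSwapEquilibrium G p (fun v => decide (v ∈ S)) := by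
  suffices ∀ v w, v ∈ S → ¬ ProfitableSwap G p (fun v => decide (v ∈ S)) v w by
    intro v w hvw
    by_cases hv : v ∈ S
    · exact this v w hv hvw
    · have hw : w ∈ S := by simpa [hv] using hvw.1
      exact this w v hw (profitableSwap_comm.1 hvw)
  intro v w hv hvw
  have hw : w ∉ S := by simpa [hv] using hvw.1
  by_cases hadj : G.Adj v w
  · exact not_profitableSwap_of_adj hp hadj hvw
  · refine not_profitableSwap_of_not_adj hp hadj (fun u hu => ?_) hvw
    have hu : u ∉ S := fun hu' => hS v hv u hu' hu
    simp [hu, hw]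

end

/-- For peak `Λ = 1/2`, every swap Schelling game on a bipartite graph
admits a swap equilibrium. -/
theorem exists_swap_equilibrium_bipartite
    {V : Type*} [Fintype V] [DecidableEq V] (G : SimpleGraph V) (b : ℕ) (p : ℝ → ℝ)
    (hgame : IsGame G b (1 / 2) p) (hbip : G.Colorable 2) :
    ∃ c : V → Bool, IsProfile c b ∧ IsSwapEquilibrium G p c := by
  obtain ⟨S, hS, rfl⟩ := exists_isIndepSet_card_eq hbip two_pos hgame.b_le_half
  exact ⟨fun v => decide (v ∈ S), by simp [IsProfile],
    isSwapEquilibrium_of_isIndepSet hgame.singlePeaked hS⟩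

end SwapSchelling
end

section
/- For every integer b > 1, there exists a swap Schelling game (G,b,Λ) on a bipartite graph G with n nodes, a swap equilibrium σ, and a strategy profile σ* such that DoI(σ*)/DoI(σ) ≥ n/(b+1); for b = 1 there exists such a game with DoI(σ*)/DoI(σ) ≥ (n−1)/3. -/
open Finset

namespace SwapSchelling

variable {V : Type*} [Fintype V] [DecidableEq V]

/-! Take the double star on `2b + 1` nodes whose hubs carry `b` and `b - 1` leaves. With the blue
agents on the `b` leaves of the first hub, every blue agent sees the fraction `1/2`, the peak of
the tent utility, so no swap is profitable for it: this is an equilibrium in which only those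
leaves and their hub are integrated. The bipartition of the double star also has `b` blue nodes,
and as a proper colouring of a connected graph it integrates all `2b + 1` agents. -/

section General

variable {G : SimpleGraph V} {c : V → Bool} {v w : V}

open scoped Classical in
lemma mem_closedNbhd : w ∈ closedNbhd G v ↔ w = v ∨ G.Adj v w := by
  simp [closedNbhd]

lemma closedNbhd_card_pos : 0 < (closedNbhd G v).card :=
  Finset.card_pos.2 ⟨v, mem_closedNbhd.2 (Or.inl rfl)⟩

lemma frac_nonneg : 0 ≤ frac G c v := by
  unfold frac
  positivity

lemma frac_le_one : frac G c v ≤ 1 := by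
  unfold frac
  rw [div_le_one (by exact_mod_cast closedNbhd_card_pos)]
  exact_mod_cast Finset.card_filter_le _ _

lemma frac_eq_one_iff : frac G c v = 1 ↔ ∀ w, G.Adj v w → c w = c v := by
  classical
  unfold frac
  rw [div_eq_one_iff_eq (by exact_mod_cast closedNbhd_card_pos.ne'), Nat.cast_inj,
    Finset.card_filter_eq_iff]
  simp only [mem_closedNbhd]
  exact ⟨fun h w hw => h w (Or.inr hw), fun h w => by rintro (rfl | hw); exacts [rfl, h w hw]⟩

lemma frac_eq_half_of_adj_iff (hv : ∀ u, G.Adj v u ↔ u = w) (hc : c w ≠ c v) :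
    frac G c v = 1 / 2 := by
  classical
  have hvw : v ≠ w := ((hv w).2 rfl).ne
  have hN : closedNbhd G v = {v, w} := by
    ext u
    simp [mem_closedNbhd, hv]
  have hblue : (closedNbhd G v).filter (fun u => c u = c v) = {v} := by
    rw [hN, Finset.filter_insert, Finset.filter_singleton, if_pos rfl, if_neg hc]
    rfl
  unfold frac
  rw [hblue, hN, Finset.card_singleton, Finset.card_pair hvw]
  norm_num

lemma DoI_eq_card_of_adj_ne [Nontrivial V] (hG : G.Preconnected)
    (hc : ∀ v w, G.Adj v w → c v ≠ c w) : DoI G c = Fintype.card V := by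
  classical
  unfold DoI
  convert Finset.card_univ (α := V)
  refine Finset.filter_true_of_mem fun v _ => ?_
  obtain ⟨w, hw⟩ := G.mem_support.1 (hG.support_eq_univ ▸ Set.mem_univ v)
  exact fun h => hc v w hw (frac_eq_one_iff.1 h w hw).symm

lemma IsSinglePeaked.le_one {p : ℝ → ℝ} {Λ x : ℝ} (hp : IsSinglePeaked p Λ)
    (hx : x ∈ Set.Icc 0 1) : p x ≤ 1 := by
  obtain ⟨⟨hΛ0, hΛ1⟩, -, hmono, hpeak, hsymm⟩ := hp
  have hle_peak : ∀ y ∈ Set.Icc 0 Λ, p y ≤ 1 := fun y hy =>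
    hpeak ▸ hmono.monotoneOn hy ⟨hΛ0.le, le_rfl⟩ hy.2
  rcases le_total x Λ with hxΛ | hΛx
  · exact hle_peak x ⟨hx.1, hxΛ⟩
  · rw [hsymm x ⟨hΛx, hx.2⟩]
    refine hle_peak _ ⟨by have := hx.2; positivity, ?_⟩
    rw [div_le_iff₀ (by linarith)]
    exact mul_le_mul_of_nonneg_left (by linarith) hΛ0.le

lemma isSwapEquilibrium_of_frac_eq_peak {p : ℝ → ℝ} {Λ : ℝ} (hp : IsSinglePeaked p Λ)
    (β : Bool) (hβ : ∀ v, c v = β → frac G c v = Λ) : IsSwapEquilibrium G p c := by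
  rintro v w ⟨hne, hv, hw⟩
  have hmax : ∀ c' u, p (frac G c' u) ≤ 1 := fun _ _ => hp.le_one ⟨frac_nonneg, frac_le_one⟩
  by_cases hcv : c v = β
  · rw [hβ v hcv, hp.map_peak] at hv
    exact (hmax _ _).not_gt hv
  · have hcw : c w = β := by revert hne hcv; cases c v <;> cases c w <;> cases β <;> simp
    rw [hβ w hcw, hp.map_peak] at hw
    exact (hmax _ _).not_gt hw

end General

noncomputable def tent (x : ℝ) : ℝ := 1 - |2 * x - 1|

lemma isSinglePeaked_tent : IsSinglePeaked tent (1 / 2) where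
  peak_mem := by norm_num
  map_zero := by norm_num [tent]
  strictMonoOn x hx y hy hxy := by
    simp only [tent, Set.mem_Icc] at *
    rw [abs_of_nonpos (by linarith), abs_of_nonpos (by linarith)]
    linarith
  map_peak := by norm_num [tent]
  symm x _ := by
    rw [tent, tent, ← abs_neg]
    ring_nf

lemma card_filter_fin_val {n : ℕ} (q : ℕ → Prop) [DecidablePred q] :
    #{v : Fin n | q v} = #{m ∈ range n | q m} := by
  rw [← card_map Fin.valEmbedding]
  congr 1
  ext m
  simp [Fin.exists_iff, and_comm]

section DoubleStar

variable {b : ℕ}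

/-- Hub `0` carries the leaves `1, …, b`, hub `2b` the leaves `b + 1, …, 2b - 1`, and the two hubs
are adjacent. -/
def doubleStar (b : ℕ) : SimpleGraph (Fin (2 * b + 1)) :=
  SimpleGraph.fromRel fun v w =>
    v.val = 0 ∧ (w.val ≤ b ∨ w.val = 2 * b) ∨ v.val = 2 * b ∧ b < w.val

def blueLeaves (b : ℕ) (v : Fin (2 * b + 1)) : Bool :=
  decide (1 ≤ v.val ∧ v.val ≤ b)

def bipartition (b : ℕ) (v : Fin (2 * b + 1)) : Bool :=
  decide (v.val = 0 ∨ b < v.val ∧ v.val < 2 * b)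

lemma doubleStar_adj {v w : Fin (2 * b + 1)} :
    (doubleStar b).Adj v w ↔ v.val ≠ w.val ∧
      ((v.val = 0 ∧ (w.val ≤ b ∨ w.val = 2 * b) ∨ v.val = 2 * b ∧ b < w.val) ∨
        (w.val = 0 ∧ (v.val ≤ b ∨ v.val = 2 * b) ∨ w.val = 2 * b ∧ b < v.val)) := by
  simp only [doubleStar, SimpleGraph.fromRel_adj, ne_eq, Fin.ext_iff]

lemma bipartition_ne_of_adj (hb : 1 ≤ b) {v w : Fin (2 * b + 1)} (h : (doubleStar b).Adj v w) :
    bipartition b v ≠ bipartition b w := by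
  rw [doubleStar_adj] at h
  simp only [bipartition, ne_eq, decide_eq_decide]
  omega

lemma doubleStar_colorable (hb : 1 ≤ b) : (doubleStar b).Colorable 2 :=
  (SimpleGraph.Coloring.mk (bipartition b) (bipartition_ne_of_adj hb)).colorable

lemma doubleStar_connected (hb : 1 ≤ b) : (doubleStar b).Connected := by
  have reachable_hub : ∀ v, (doubleStar b).Reachable ⟨0, by omega⟩ v := by
    intro v
    have hubs : (doubleStar b).Adj ⟨0, by omega⟩ ⟨2 * b, by omega⟩ :=
      doubleStar_adj.2 ⟨by dsimp only; omega, .inl (.inl ⟨rfl, .inr rfl⟩)⟩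
    have hv : v.val = 0 ∨ (doubleStar b).Adj ⟨0, by omega⟩ v ∨
        (doubleStar b).Adj ⟨2 * b, by omega⟩ v := by
      simp only [doubleStar_adj, true_and]
      omega
    rcases hv with hv | hv | hv
    · rw [show v = ⟨0, by omega⟩ from Fin.ext hv]
    · exact hv.reachable
    · exact hubs.reachable.trans hv.reachable
  exact ⟨fun u v => (reachable_hub u).symm.trans (reachable_hub v)⟩

lemma frac_blueLeaves_of_blue {v : Fin (2 * b + 1)} (hv : blueLeaves b v = true) :
    frac (doubleStar b) (blueLeaves b) v = 1 / 2 := by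
  simp only [blueLeaves, decide_eq_true_eq] at hv
  refine frac_eq_half_of_adj_iff (w := ⟨0, by omega⟩) (fun u => ?_) ?_
  · simp only [doubleStar_adj, Fin.ext_iff]
    omega
  · dsimp only [blueLeaves]
    simp only [ne_eq, decide_eq_decide]
    omega

lemma frac_blueLeaves_eq_one_iff (hb : 1 ≤ b) {v : Fin (2 * b + 1)} :
    frac (doubleStar b) (blueLeaves b) v = 1 ↔ b < v.val := by
  simp only [frac_eq_one_iff, doubleStar_adj, blueLeaves, decide_eq_decide]
  constructor
  · intro h
    by_contra hvb
    by_cases hv0 : v.val = 0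
    · have := h ⟨1, by omega⟩
      simp only at this
      omega
    · have := h ⟨0, by omega⟩
      simp only [true_and] at this
      omega
  · intro hv w hw
    omega

lemma isProfile_blueLeaves : IsProfile (blueLeaves b) b := by
  simp only [IsProfile, blueLeaves, decide_eq_true_eq]
  rw [card_filter_fin_val (fun m => 1 ≤ m ∧ m ≤ b),
    show {m ∈ range (2 * b + 1) | 1 ≤ m ∧ m ≤ b} = Icc 1 b by
      ext; simp only [mem_filter, mem_range, mem_Icc]; omega]
  simp

lemma isProfile_bipartition (hb : 1 ≤ b) : IsProfile (bipartition b) b := by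
  simp only [IsProfile, bipartition, decide_eq_true_eq]
  rw [card_filter_fin_val (fun m => m = 0 ∨ b < m ∧ m < 2 * b),
    show {m ∈ range (2 * b + 1) | m = 0 ∨ b < m ∧ m < 2 * b} = insert 0 (Ioo b (2 * b)) by
      ext; simp only [mem_filter, mem_range, mem_insert, mem_Ioo]; omega,
    card_insert_of_notMem (by simp), Nat.card_Ioo]
  omega

lemma DoI_blueLeaves (hb : 1 ≤ b) : DoI (doubleStar b) (blueLeaves b) = b + 1 := by
  unfold DoI
  simp only [ne_eq, frac_blueLeaves_eq_one_iff hb, not_lt]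
  rw [card_filter_fin_val (· ≤ b),
    show {m ∈ range (2 * b + 1) | m ≤ b} = range (b + 1) by
      ext; simp only [mem_filter, mem_range]; omega]
  exact card_range _

lemma DoI_bipartition (hb : 1 ≤ b) : DoI (doubleStar b) (bipartition b) = 2 * b + 1 := by
  have : Nontrivial (Fin (2 * b + 1)) := Fin.nontrivial_iff_two_le.2 (by omega)
  rw [DoI_eq_card_of_adj_ne (doubleStar_connected hb).preconnected
    (fun _ _ => bipartition_ne_of_adj hb), Fintype.card_fin]

end DoubleStar

lemma exists_swapEquilibrium_doI_ratio (b : ℕ) (hb : 1 ≤ b) :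
    ∃ (n : ℕ) (G : SimpleGraph (Fin n)) (Λ : ℝ) (p : ℝ → ℝ),
      IsGame G b Λ p ∧ G.Colorable 2 ∧
      ∃ c cstar : Fin n → Bool, IsProfile c b ∧ IsProfile cstar b ∧
        IsSwapEquilibrium G p c ∧
        (n : ℝ) / ((b : ℝ) + 1) ≤ (DoI G cstar : ℝ) / (DoI G c : ℝ) := by
  refine ⟨2 * b + 1, doubleStar b, 1 / 2, tent,
    ⟨doubleStar_connected hb, hb, by simp, isSinglePeaked_tent⟩, doubleStar_colorable hb,
    blueLeaves b, bipartition b, isProfile_blueLeaves, isProfile_bipartition hb,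
    isSwapEquilibrium_of_frac_eq_peak isSinglePeaked_tent true
      fun _ => frac_blueLeaves_of_blue, ?_⟩
  rw [DoI_blueLeaves hb, DoI_bipartition hb]
  push_cast
  rfl

/-- For every `b > 1` there is a game on a bipartite graph with a swap
equilibrium `σ` and a profile `σ*` with `DoI(σ*)/DoI(σ) ≥ n/(b+1)`; for `b = 1` there is
such a game with `DoI(σ*)/DoI(σ) ≥ (n-1)/3`. -/
theorem price_of_anarchy_lower_bound_bipartite :
    (∀ b : ℕ, 1 < b →
      ∃ (n : ℕ) (G : SimpleGraph (Fin n)) (Λ : ℝ) (p : ℝ → ℝ),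
        IsGame G b Λ p ∧ G.Colorable 2 ∧
        ∃ c cstar : Fin n → Bool, IsProfile c b ∧ IsProfile cstar b ∧
          IsSwapEquilibrium G p c ∧
          (n : ℝ) / ((b : ℝ) + 1) ≤ (DoI G cstar : ℝ) / (DoI G c : ℝ)) ∧
    (∃ (n : ℕ) (G : SimpleGraph (Fin n)) (Λ : ℝ) (p : ℝ → ℝ),
        IsGame G 1 Λ p ∧ G.Colorable 2 ∧
        ∃ c cstar : Fin n → Bool, IsProfile c 1 ∧ IsProfile cstar 1 ∧
          IsSwapEquilibrium G p c ∧
          ((n : ℝ) - 1) / 3 ≤ (DoI G cstar : ℝ) / (DoI G c : ℝ)) := by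
  refine ⟨fun b hb => exists_swapEquilibrium_doI_ratio b hb.le, ?_⟩
  obtain ⟨n, G, Λ, p, hgame, hcol, c, cstar, hc, hcstar, hse, hratio⟩ :=
    exists_swapEquilibrium_doI_ratio 1 le_rfl
  refine ⟨n, G, Λ, p, hgame, hcol, c, cstar, hc, hcstar, hse, le_trans ?_ hratio⟩
  push_cast
  linarith [n.cast_nonneg (α := ℝ)]

end SwapSchelling
end
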